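/- arXiv:1907.07372 — 3 statements merged into one kernel-verified Lean document; each statement's English description precedes it below -/
import Mathlib

section
/- Let A be a commutative ring, M a finitely generated A-module, B a commutative finite A-algebra acting on M, and ι : Z → B a monoid homomorphism from a commutative monoid Z into (B, ·). Call a maximal ideal n of B ordinary if n ∩ ι(Z) = ∅. Suppose B is a finite algebra over a complete local Noetherian ring (so B is semi-local and M decomposes as the product of its localizations at maximal ideals of B). Then M_ord := ∏_{n ordinary} M_n is a direct summand of M on which every element ι(z), z ∈ Z, acts invertibly; consequently the Z-action on M_ord extends uniquely to an action of the group completion of Z. -/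
/-!
The ordinary part is `e M` for an idempotent `e` of `B`. The principal ideals `(ι z)` satisfy
the descending chain condition, so one of them, `(ι z₀)`, is minimal; as `(ι (z₀ z)) ≤ (ι z₀)`,
minimality gives `ι z₀ ∈ (ι z₀ · ι z)` for every `z`. In particular `ι z₀ = c (ι z₀)²`, so
`e := c ι z₀` is idempotent with `e B = ι z₀ B`, and every `ι z` divides `e`, i.e. is
invertible on `e M`. Conversely `e` fixes `ι z₀ M`, which contains every submodule on which
`ι z₀` acts surjectively.
-/

theorem exists_forall_mul_dvd_of_isArtinianRing {R Z : Type*} [CommRing R] [IsArtinianRing R]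
    [Monoid Z] (ι : Z →* R) : ∃ z₀, ∀ z, ι z₀ * ι z ∣ ι z₀ := by
  obtain ⟨_, ⟨z₀, rfl⟩, hmin⟩ := IsArtinian.set_has_minimal (R := R) (M := R)
    (Set.range fun z => Ideal.span {ι z}) ⟨_, 1, rfl⟩
  refine ⟨z₀, fun z => ?_⟩
  have hle : Ideal.span {ι z₀ * ι z} ≤ Ideal.span {ι z₀} :=
    Ideal.span_singleton_le_span_singleton.mpr (dvd_mul_right _ _)
  have heq : Ideal.span {ι z₀ * ι z} = Ideal.span {ι z₀} :=
    hle.eq_of_not_lt (hmin _ ⟨z₀ * z, congrArg _ (by rw [map_mul])⟩)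
  exact Ideal.span_singleton_le_span_singleton.mp heq.ge

theorem exists_isIdempotentElem_of_mul_self_dvd {R : Type*} [CommRing R] {a : R}
    (h : a * a ∣ a) : ∃ e, IsIdempotentElem e ∧ a ∣ e ∧ e * a = a := by
  obtain ⟨c, hc⟩ := h
  refine ⟨c * a, ?_, dvd_mul_left a c, ?_⟩
  · calc c * a * (c * a) = c * (a * a * c) := by ring
      _ = c * a := by rw [← hc]
  · calc c * a * a = a * a * c := by ring
      _ = a := hc.symm

section IdempotentPart

variable {R M : Type*} [CommRing R] [AddCommGroup M] [Module R M] {e : R}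

theorem IsIdempotentElem.isIdempotentElem_lsmul (he : IsIdempotentElem e) :
    IsIdempotentElem (Algebra.lsmul R R M e) :=
  he.map _

theorem IsIdempotentElem.mem_range_lsmul_iff (he : IsIdempotentElem e) {x : M} :
    x ∈ LinearMap.range (Algebra.lsmul R R M e) ↔ e • x = x :=
  LinearMap.IsIdempotentElem.mem_range_iff he.isIdempotentElem_lsmul

theorem IsIdempotentElem.bijOn_smul_range_lsmul (he : IsIdempotentElem e) {b : R} (hb : b ∣ e) :
    Set.BijOn (fun x => b • x) (LinearMap.range (Algebra.lsmul R R M e) : Set M)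
      (LinearMap.range (Algebra.lsmul R R M e)) := by
  obtain ⟨d, rfl⟩ := hb
  have hinv : ∀ x ∈ LinearMap.range (Algebra.lsmul R R M (b * d)), d • b • x = x := by
    intro x hx
    rw [smul_smul, mul_comm]
    exact he.mem_range_lsmul_iff.mp hx
  refine Set.InvOn.bijOn (f' := fun x => d • x) ⟨hinv, fun x hx => ?_⟩
    (fun x hx => Submodule.smul_mem _ b hx) (fun x hx => Submodule.smul_mem _ d hx)
  show b • d • x = x
  rw [smul_comm]
  exact hinv x hx

theorem IsIdempotentElem.le_range_lsmul_of_surjOn (he : IsIdempotentElem e) {a : R}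
    (hea : e * a = a) {N : Submodule R M} (hN : Set.SurjOn (fun x => a • x) (N : Set M) N) :
    N ≤ LinearMap.range (Algebra.lsmul R R M e) := by
  intro x hx
  obtain ⟨y, -, rfl⟩ := hN hx
  rw [he.mem_range_lsmul_iff, smul_smul, hea]

end IdempotentPart

theorem statement_4_general {B : Type*} [CommRing B] [IsArtinianRing B]
    {M : Type*} [AddCommGroup M] [Module B M]
    {Z : Type*} [CommMonoid Z] (ι : Z →* B) :
    ∃ N : Submodule B M,
      (∃ N' : Submodule B M, IsCompl N N') ∧
      (∀ z : Z, Set.BijOn (fun x => ι z • x) (N : Set M) (N : Set M)) ∧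
      (∀ N'' : Submodule B M,
        (∀ z : Z, Set.BijOn (fun x => ι z • x) (N'' : Set M) (N'' : Set M)) → N'' ≤ N) := by
  obtain ⟨z₀, hz₀⟩ := exists_forall_mul_dvd_of_isArtinianRing ι
  obtain ⟨e, he, hdvd, hea⟩ := exists_isIdempotentElem_of_mul_self_dvd (hz₀ z₀)
  refine ⟨_, ⟨_, LinearMap.IsIdempotentElem.isCompl he.isIdempotentElem_lsmul⟩,
    fun z => ?_, fun N'' hN'' => ?_⟩
  · exact he.bijOn_smul_range_lsmul (((dvd_mul_left _ _).trans (hz₀ z)).trans hdvd)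
  · exact he.le_range_lsmul_of_surjOn hea (hN'' z₀).surjOn

/-- Let `B` be a commutative ring which is finite over a complete local
Noetherian ring (modelled here by `B` Artinian, as in the paper's setting where `B` is a
finite algebra over `O_E/ϖ^s` or a semilocal complete ring), `M` a finitely generated
`B`-module, and `ι : Z → B` a monoid homomorphism from a commutative monoid `Z` into
`(B, ·)`.  Then the ordinary part `M_ord = ∏_{n ordinary} M_n` exists as a direct
summand `N` of `M`: every `ι z` acts bijectively (hence invertibly) on `N`, and `N` is
the largest submodule on which all `ι z` act invertibly (so that the `Z`-action on `N`
extends uniquely to an action of the group completion of `Z`). -/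
theorem statement_4 {B : Type*} [CommRing B] [IsArtinianRing B]
    {M : Type*} [AddCommGroup M] [Module B M] [Module.Finite B M]
    {Z : Type*} [CommMonoid Z] (ι : Z →* B) :
    ∃ N : Submodule B M,
      (∃ N' : Submodule B M, IsCompl N N') ∧
      (∀ z : Z, Set.BijOn (fun x => ι z • x) (N : Set M) (N : Set M)) ∧
      (∀ N'' : Submodule B M,
        (∀ z : Z, Set.BijOn (fun x => ι z • x) (N'' : Set M) (N'' : Set M)) → N'' ≤ N) :=
  statement_4_general ι
end

section
/- Let Γ be a profinite group, k a finite field, and ρ̄ : Γ → P(k) a continuous representation landing in a parabolic subgroup P ⊆ GL_n with Levi decomposition into blocks ρ̄_1, ..., ρ̄_k (the graded pieces of the associated filtration F on V = k^n). Assume Hom_Γ(ρ̄_i, ρ̄_j) = 0 for all i ≠ j. If A is a local Artinian ring with residue field k and M_1, M_2 ∈ GL_n(A) are such that M_i ρ_A M_i^{-1} has image in P(A) and reduces to ρ̄ modulo the maximal ideal (for a fixed lift ρ_A : Γ → GL_n(A) of ρ̄), then M_1 M_2^{-1} ∈ P(A). -/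
/-- The index of the diagonal block (among blocks of sizes `nn 0, …, nn (K-1)`)
containing the row/column index `a`. -/
def blockIdx (K : ℕ) (nn : ℕ → ℕ) (a : ℕ) : ℕ :=
  ((Finset.range K).filter fun i => ∑ j ∈ Finset.range (i + 1), nn j ≤ a).card

/-- A matrix lies in the standard block-upper-triangular parabolic `P` iff all entries
strictly below the diagonal blocks vanish. -/
def IsBlockUpper {R : Type*} [Semiring R] (n K : ℕ) (nn : ℕ → ℕ)
    (M : Matrix (Fin n) (Fin n) R) : Prop :=
  ∀ a b : Fin n, blockIdx K nn (b : ℕ) < blockIdx K nn (a : ℕ) → M a b = 0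

/-- The `i`-th diagonal block of a matrix, viewed as a full-size matrix (the graded
piece of the associated filtered representation). -/
def diagBlock {R : Type*} [Semiring R] (n K : ℕ) (nn : ℕ → ℕ) (i : ℕ)
    (M : Matrix (Fin n) (Fin n) R) : Matrix (Fin n) (Fin n) R :=
  fun a b => if blockIdx K nn (a : ℕ) = i ∧ blockIdx K nn (b : ℕ) = i then M a b else 0

/-- A matrix supported on the `(i,j)` block (a linear map from the `j`-th graded piece
to the `i`-th one). -/
def IsBlockSupported {R : Type*} [Semiring R] (n K : ℕ) (nn : ℕ → ℕ) (i j : ℕ)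
    (C : Matrix (Fin n) (Fin n) R) : Prop :=
  ∀ a b : Fin n, ¬(blockIdx K nn (a : ℕ) = i ∧ blockIdx K nn (b : ℕ) = j) → C a b = 0

/-
The matrix `X = M₁ M₂⁻¹` satisfies `ρ₁(g) X = X ρ₂(g)`, where `ρᵢ = Mᵢ ρ_A Mᵢ⁻¹` are block upper
triangular lifts of `ρ̄`. Let `I` be the ideal generated by the entries of `X` below the diagonal
blocks and `𝔪` the maximal ideal. Going through the blocks below the diagonal in order of
decreasing distance from it, each entry lies in `𝔪 I`: modulo `𝔪 I` the `(i, j)` block of `X`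
intertwines `ρ̄ⱼ` and `ρ̄ᵢ` with coefficients in the `k`-vector space `I / 𝔪 I`, so every linear
functional on `I / 𝔪 I` turns it into an element of `Hom_Γ(ρ̄ⱼ, ρ̄ᵢ) = 0`. Hence `I = 𝔪 I`, and
`I = 0` by Nakayama.
-/

section ResidueFunctional

variable {A k : Type*} [CommRing A] [Field k] {φ : A →+* k}

theorem exists_semilinearMap_ne_zero_of_notMem_smul (hφ : Function.Surjective φ) (I : Ideal A)
    (x : I) (hx : (x : A) ∉ RingHom.ker φ • I) :
    ∃ μ : I →ₛₗ[φ] k, μ x ≠ 0 := by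
  have := RingHom.ker_isMaximal_of_surjective φ hφ
  let _ : Field (A ⧸ RingHom.ker φ) := Ideal.Quotient.field _
  have hv : (Submodule.Quotient.mk x : I ⧸ (RingHom.ker φ • ⊤ : Submodule A I)) ≠ 0 := by
    rwa [Ne, Submodule.Quotient.mk_eq_zero, Submodule.mem_smul_top_iff]
  obtain ⟨f, hf⟩ := Module.Projective.exists_dual_ne_zero (A ⧸ RingHom.ker φ) hv
  let e := RingHom.quotientKerEquivOfSurjective hφ
  refine ⟨{ toFun := fun y => e (f (Submodule.Quotient.mk y))
            map_add' := fun y z => by simp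
            map_smul' := fun a y => ?_ }, by simpa using hf⟩
  rw [← Module.Quotient.mk_smul_mk, map_smul, smul_eq_mul, map_mul]
  rfl

theorem semilinearMap_apply_eq_zero_of_mem_ker_smul {I : Ideal A} (μ : I →ₛₗ[φ] k) (y : I)
    (hy : (y : A) ∈ RingHom.ker φ • I) : μ y = 0 := by
  rw [← Submodule.mem_smul_top_iff] at hy
  induction hy using Submodule.smul_induction_on' with
  | smul a ha z _ => rw [map_smulₛₗ, RingHom.mem_ker.mp ha, zero_smul]
  | add y _ z _ hy hz => rw [map_add, hy, hz, add_zero]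

end ResidueFunctional

section Blocks

variable {n K : ℕ} {nn : ℕ → ℕ}

theorem blockIdx_le (a : ℕ) : blockIdx K nn a ≤ K :=
  (Finset.card_filter_le _ _).trans_eq (Finset.card_range K)

theorem blockIdx_lt (hsum : ∑ i ∈ Finset.range K, nn i = n) (a : Fin n) :
    blockIdx K nn a < K := by
  obtain ⟨K, rfl⟩ : ∃ K', K = K' + 1 :=
    Nat.exists_eq_succ_of_ne_zero (by rintro rfl; have := a.isLt; simp at hsum; omega)
  refine (Finset.card_lt_card (Finset.filter_ssubset.2 ⟨K, by simp, ?_⟩)).trans_eq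
    (Finset.card_range _)
  simp [hsum]

theorem lowerBlocks_induction {P : Fin n → Fin n → Prop}
    (step : ∀ a b : Fin n, blockIdx K nn b < blockIdx K nn a →
      (∀ p q : Fin n,
        blockIdx K nn a + blockIdx K nn q < blockIdx K nn p + blockIdx K nn b → P p q) →
      P a b)
    (a b : Fin n) (hab : blockIdx K nn b < blockIdx K nn a) : P a b := by
  induction hd : K + blockIdx K nn b - blockIdx K nn a using Nat.strong_induction_on
    generalizing a b with
  | _ d ih =>
    refine step a b hab fun p q hpq => ih _ ?_ p q (by omega) rfl
    have := blockIdx_le (K := K) (nn := nn) p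
    omega

variable {R : Type*} [CommSemiring R]

def restrictBlock (i j : ℕ) (M : Matrix (Fin n) (Fin n) R) : Matrix (Fin n) (Fin n) R :=
  fun a b => if blockIdx K nn a = i ∧ blockIdx K nn b = j then M a b else 0

theorem diagBlock_mul_of_isBlockSupported {i j : ℕ} {C : Matrix (Fin n) (Fin n) R}
    (hC : IsBlockSupported n K nn i j C) (D : Matrix (Fin n) (Fin n) R) :
    diagBlock n K nn i D * C = restrictBlock (K := K) (nn := nn) i j (D * C) := by
  ext a b
  simp only [Matrix.mul_apply, diagBlock, restrictBlock]
  by_cases hab : blockIdx K nn a = i ∧ blockIdx K nn b = j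
  · rw [if_pos hab]
    refine Finset.sum_congr rfl fun l _ => ?_
    by_cases hl : blockIdx K nn l = i
    · rw [if_pos ⟨hab.1, hl⟩]
    · rw [hC l b (by tauto), mul_zero, mul_zero]
  · rw [if_neg hab]
    refine Finset.sum_eq_zero fun l _ => ?_
    by_cases ha : blockIdx K nn a = i
    · rw [hC l b (by tauto), mul_zero]
    · rw [if_neg (by tauto), zero_mul]

theorem mul_diagBlock_of_isBlockSupported {i j : ℕ} {C : Matrix (Fin n) (Fin n) R}
    (hC : IsBlockSupported n K nn i j C) (D : Matrix (Fin n) (Fin n) R) :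
    C * diagBlock n K nn j D = restrictBlock (K := K) (nn := nn) i j (C * D) := by
  ext a b
  simp only [Matrix.mul_apply, diagBlock, restrictBlock]
  by_cases hab : blockIdx K nn a = i ∧ blockIdx K nn b = j
  · rw [if_pos hab]
    refine Finset.sum_congr rfl fun l _ => ?_
    by_cases hl : blockIdx K nn l = j
    · rw [if_pos ⟨hl, hab.2⟩]
    · rw [hC a l (by tauto), zero_mul, zero_mul]
  · rw [if_neg hab]
    refine Finset.sum_eq_zero fun l _ => ?_
    by_cases hb : blockIdx K nn b = j
    · rw [hC a l (by tauto), zero_mul]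
    · rw [if_neg (by tauto), mul_zero]

theorem IsBlockUpper.mul_apply_mem {J : Ideal R} {M Z : Matrix (Fin n) (Fin n) R}
    (hM : IsBlockUpper n K nn M) {p q : Fin n}
    (hZ : ∀ l : Fin n, blockIdx K nn p ≤ blockIdx K nn l → Z l q ∈ J) : (M * Z) p q ∈ J := by
  rw [Matrix.mul_apply]
  exact J.sum_mem fun (l : Fin n) _ => (le_or_gt (blockIdx K nn p) (blockIdx K nn l)).elim
      (fun h => J.mul_mem_left _ (hZ l h)) (fun h => by rw [hM p l h, zero_mul]; exact J.zero_mem)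

theorem IsBlockUpper.apply_mul_mem {J : Ideal R} {M Z : Matrix (Fin n) (Fin n) R}
    (hM : IsBlockUpper n K nn M) {p q : Fin n}
    (hZ : ∀ l : Fin n, blockIdx K nn l ≤ blockIdx K nn q → Z p l ∈ J) : (Z * M) p q ∈ J := by
  rw [Matrix.mul_apply]
  exact J.sum_mem fun (l : Fin n) _ => (le_or_gt (blockIdx K nn l) (blockIdx K nn q)).elim
      (fun h => J.mul_mem_right _ (hZ l h)) (fun h => by rw [hM l q h, mul_zero]; exact J.zero_mem)

end Blocks

theorem mul_restrictBlock_sub_mem {n K : ℕ} {nn : ℕ → ℕ} {R : Type*} [CommRing R]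
    {ρ₁ ρ₂ X : Matrix (Fin n) (Fin n) R} (hX : ρ₁ * X = X * ρ₂)
    (h₁ : IsBlockUpper n K nn ρ₁) (h₂ : IsBlockUpper n K nn ρ₂) {i j : ℕ} {J : Ideal R}
    (hfar : ∀ p q : Fin n, i + blockIdx K nn q < blockIdx K nn p + j → X p q ∈ J)
    {a b : Fin n} (ha : blockIdx K nn a = i) (hb : blockIdx K nn b = j) :
    (ρ₁ * restrictBlock (K := K) (nn := nn) i j X) a b
      - (restrictBlock (K := K) (nn := nn) i j X * ρ₂) a b ∈ J := by
  set B := restrictBlock (K := K) (nn := nn) i j X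
  have hXB : ∀ p q : Fin n, i ≤ blockIdx K nn p → blockIdx K nn q ≤ j → (X - B) p q ∈ J :=
    fun p q hp hq => by
      simp only [Matrix.sub_apply, B, restrictBlock]
      split_ifs with h
      · rw [sub_self]; exact J.zero_mem
      · rw [sub_zero]; exact hfar p q (by omega)
  have : (ρ₁ * B) a b - (B * ρ₂) a b = ((X - B) * ρ₂) a b - (ρ₁ * (X - B)) a b := by
    simp only [Matrix.sub_mul, Matrix.mul_sub, hX, Matrix.sub_apply]; ring
  rw [this]
  exact sub_mem (h₂.apply_mul_mem fun l hl => hXB a l ha.ge (hb ▸ hl))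
    (h₁.mul_apply_mem fun l hl => hXB l b (ha ▸ hl) hb.le)

section Intertwiner

variable {Γ A k : Type*} [CommRing A] [Field k] {φ : A →+* k} {n K : ℕ} {nn : ℕ → ℕ}
  {σ : Γ → Matrix (Fin n) (Fin n) k} {ρ₁ ρ₂ : Γ → Matrix (Fin n) (Fin n) A}
  {X : Matrix (Fin n) (Fin n) A}

theorem mem_ker_smul_of_farther_blocks (hφ : Function.Surjective φ) (hX : ∀ g, ρ₁ g * X = X * ρ₂ g)
    (h₁ : ∀ g, IsBlockUpper n K nn (ρ₁ g)) (h₂ : ∀ g, IsBlockUpper n K nn (ρ₂ g))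
    (hr₁ : ∀ g, (ρ₁ g).map φ = σ g) (hr₂ : ∀ g, (ρ₂ g).map φ = σ g) {i j : ℕ}
    (hhom : ∀ C : Matrix (Fin n) (Fin n) k, IsBlockSupported n K nn i j C →
      (∀ g, diagBlock n K nn i (σ g) * C = C * diagBlock n K nn j (σ g)) → C = 0)
    (I : Ideal A) (hI : ∀ p q : Fin n, blockIdx K nn p = i → blockIdx K nn q = j → X p q ∈ I)
    (hfar : ∀ p q : Fin n, i + blockIdx K nn q < blockIdx K nn p + j →
      X p q ∈ RingHom.ker φ • I)
    {p q : Fin n} (hp : blockIdx K nn p = i) (hq : blockIdx K nn q = j) :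
    X p q ∈ RingHom.ker φ • I := by
  set B := restrictBlock (K := K) (nn := nn) i j X
  have hB : ∀ a b, B a b ∈ I := fun a b => by
    simp only [B, restrictBlock]
    split_ifs with h
    exacts [hI a b h.1 h.2, I.zero_mem]
  let Y : Fin n → Fin n → I := fun a b => ⟨B a b, hB a b⟩
  by_contra hx
  obtain ⟨μ, hμ⟩ := exists_semilinearMap_ne_zero_of_notMem_smul hφ I (Y p q)
    (by simpa [Y, B, restrictBlock, hp, hq] using hx)
  let C : Matrix (Fin n) (Fin n) k := fun a b => μ (Y a b)
  have hCsupp : IsBlockSupported n K nn i j C := fun a b h =>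
    (congrArg μ (Subtype.ext (if_neg h))).trans (map_zero μ)
  have hint : ∀ g, diagBlock n K nn i (σ g) * C = C * diagBlock n K nn j (σ g) := by
    intro g
    rw [diagBlock_mul_of_isBlockSupported hCsupp, mul_diagBlock_of_isBlockSupported hCsupp]
    ext a b
    simp only [restrictBlock]
    split_ifs with hab
    · have hcoe : ((∑ l, ρ₁ g a l • Y l b - ∑ l, ρ₂ g l b • Y a l : I) : A)
          = (ρ₁ g * B) a b - (B * ρ₂ g) a b := by
        simp [Y, Matrix.mul_apply, mul_comm]
      calc (σ g * C) a b = μ (∑ l, ρ₁ g a l • Y l b) := by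
            rw [← hr₁ g, Matrix.mul_apply, map_sum]
            simp only [map_smulₛₗ, Matrix.map_apply, smul_eq_mul, C]
        _ = μ (∑ l, ρ₂ g l b • Y a l) := sub_eq_zero.1 <| by
            rw [← map_sub]
            refine semilinearMap_apply_eq_zero_of_mem_ker_smul μ _ (hcoe ▸ ?_)
            exact mul_restrictBlock_sub_mem (hX g) (h₁ g) (h₂ g) hfar hab.1 hab.2
        _ = (C * σ g) a b := by
            rw [← hr₂ g, Matrix.mul_apply, map_sum]
            simp only [map_smulₛₗ, Matrix.map_apply, smul_eq_mul, mul_comm, C]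
    · rfl
  exact hμ (congrFun (congrFun (hhom C hCsupp hint) p) q)

theorem isBlockUpper_of_mul_eq_mul [IsNoetherianRing A] [IsLocalRing A]
    (hsum : ∑ i ∈ Finset.range K, nn i = n) (hφ : Function.Surjective φ)
    (hhom : ∀ i j : ℕ, i < K → j < K → i ≠ j → ∀ C : Matrix (Fin n) (Fin n) k,
      IsBlockSupported n K nn i j C →
      (∀ g, diagBlock n K nn i (σ g) * C = C * diagBlock n K nn j (σ g)) → C = 0)
    (hX : ∀ g, ρ₁ g * X = X * ρ₂ g)
    (h₁ : ∀ g, IsBlockUpper n K nn (ρ₁ g)) (h₂ : ∀ g, IsBlockUpper n K nn (ρ₂ g))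
    (hr₁ : ∀ g, (ρ₁ g).map φ = σ g) (hr₂ : ∀ g, (ρ₂ g).map φ = σ g) :
    IsBlockUpper n K nn X := by
  set I : Ideal A := Ideal.span {x | ∃ a b : Fin n, blockIdx K nn b < blockIdx K nn a ∧ X a b = x}
  have hI : ∀ a b : Fin n, blockIdx K nn b < blockIdx K nn a → X a b ∈ I :=
    fun a b h => Ideal.subset_span ⟨a, b, h, rfl⟩
  have hsmul : ∀ a b : Fin n, blockIdx K nn b < blockIdx K nn a → X a b ∈ RingHom.ker φ • I :=
    lowerBlocks_induction fun a b hab hfar =>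
      mem_ker_smul_of_farther_blocks hφ hX h₁ h₂ hr₁ hr₂
        (hhom _ _ (blockIdx_lt hsum a) (blockIdx_lt hsum b) hab.ne') I
        (fun p q hp hq => hI p q (hp ▸ hq ▸ hab)) hfar rfl rfl
  have hker : RingHom.ker φ ≤ Ideal.jacobson ⊥ :=
    (IsLocalRing.eq_maximalIdeal (RingHom.ker_isMaximal_of_surjective φ hφ)).le.trans
      (IsLocalRing.maximalIdeal_le_jacobson ⊥)
  have hbot : I = ⊥ := Submodule.eq_bot_of_le_smul_of_le_jacobson_bot _ I
    (IsNoetherian.noetherian I) (Ideal.span_le.2 fun _ ⟨a, b, h, hx⟩ => hx ▸ hsmul a b h) hker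
  intro a b h
  simpa [hbot] using hI a b h

end Intertwiner

theorem statement_6_general {Γ : Type*} [Group Γ] {k : Type*} [Field k]
    (n K : ℕ) (nn : ℕ → ℕ)
    (hsum : ∑ i ∈ Finset.range K, nn i = n)
    (ρbar : Γ →* GL (Fin n) k)
    (hom0 : ∀ i j : ℕ, i < K → j < K → i ≠ j → ∀ C : Matrix (Fin n) (Fin n) k,
      IsBlockSupported n K nn i j C →
      (∀ g, diagBlock n K nn i ((ρbar g).val) * C = C * diagBlock n K nn j ((ρbar g).val)) →
      C = 0)
    {A : Type*} [CommRing A] [IsArtinianRing A] [IsLocalRing A]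
    (φ : A →+* k) (hφ : Function.Surjective φ)
    (ρA : Γ →* GL (Fin n) A)
    (M₁ M₂ : GL (Fin n) A)
    (h1 : ∀ g, IsBlockUpper n K nn ((M₁ * ρA g * M₁⁻¹).val))
    (h1r : ∀ g, ((M₁ * ρA g * M₁⁻¹).val).map φ = (ρbar g).val)
    (h2 : ∀ g, IsBlockUpper n K nn ((M₂ * ρA g * M₂⁻¹).val))
    (h2r : ∀ g, ((M₂ * ρA g * M₂⁻¹).val).map φ = (ρbar g).val) :
    IsBlockUpper n K nn ((M₁ * M₂⁻¹).val) ∧ IsBlockUpper n K nn (((M₁ * M₂⁻¹)⁻¹).val) := by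
  have conj_mul : ∀ (N₁ N₂ : GL (Fin n) A) (g : Γ),
      (N₁ * ρA g * N₁⁻¹).val * (N₁ * N₂⁻¹).val = (N₁ * N₂⁻¹).val * (N₂ * ρA g * N₂⁻¹).val :=
    fun N₁ N₂ g => by rw [← Units.val_mul, ← Units.val_mul]; group
  refine ⟨isBlockUpper_of_mul_eq_mul hsum hφ hom0 (conj_mul M₁ M₂) h1 h2 h1r h2r, ?_⟩
  rw [mul_inv_rev, inv_inv]
  exact isBlockUpper_of_mul_eq_mul hsum hφ hom0 (conj_mul M₂ M₁) h2 h1 h2r h1r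

/-- let `ρ̄ : Γ → P(k) ⊆ GL_n(k)` be a representation landing in the
standard parabolic `P` with graded pieces `ρ̄_1, …, ρ̄_K` satisfying
`Hom_Γ(ρ̄_i, ρ̄_j) = 0` for `i ≠ j` (encoded via block-supported intertwining matrices).
If `A` is a local Artinian ring with residue field `k` (via `φ`) and
`M₁, M₂ ∈ GL_n(A)` both conjugate a fixed lift `ρ_A` of `ρ̄` into `P(A)` with reduction
`ρ̄`, then `M₁ M₂⁻¹ ∈ P(A)`. -/
theorem statement_6 {Γ : Type*} [Group Γ] {k : Type*} [Field k] [Finite k]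
    (n K : ℕ) (nn : ℕ → ℕ) (hpos : ∀ i < K, 0 < nn i)
    (hsum : ∑ i ∈ Finset.range K, nn i = n)
    (ρbar : Γ →* GL (Fin n) k) (hP : ∀ g, IsBlockUpper n K nn (ρbar g).val)
    (hom0 : ∀ i j : ℕ, i < K → j < K → i ≠ j → ∀ C : Matrix (Fin n) (Fin n) k,
      IsBlockSupported n K nn i j C →
      (∀ g, diagBlock n K nn i ((ρbar g).val) * C = C * diagBlock n K nn j ((ρbar g).val)) →
      C = 0)
    {A : Type*} [CommRing A] [IsArtinianRing A] [IsLocalRing A]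
    (φ : A →+* k) (hφ : Function.Surjective φ) (hker : ∀ a : A, φ a = 0 ↔ ¬IsUnit a)
    (ρA : Γ →* GL (Fin n) A)
    (hlift : ∀ g, ((ρA g).val).map φ = (ρbar g).val)
    (M₁ M₂ : GL (Fin n) A)
    (h1 : ∀ g, IsBlockUpper n K nn ((M₁ * ρA g * M₁⁻¹).val))
    (h1r : ∀ g, ((M₁ * ρA g * M₁⁻¹).val).map φ = (ρbar g).val)
    (h2 : ∀ g, IsBlockUpper n K nn ((M₂ * ρA g * M₂⁻¹).val))
    (h2r : ∀ g, ((M₂ * ρA g * M₂⁻¹).val).map φ = (ρbar g).val) :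
    IsBlockUpper n K nn ((M₁ * M₂⁻¹).val) ∧ IsBlockUpper n K nn (((M₁ * M₂⁻¹)⁻¹).val) :=
  statement_6_general n K nn hsum ρbar hom0 φ hφ ρA M₁ M₂ h1 h1r h2 h2r
end

section
/- Let Γ be a profinite group with finite-dimensional continuous cohomology, k a finite field, ρ̄ : Γ → GL_n(k) continuous preserving a filtration F with graded pieces ρ̄_1,...,ρ̄_k, and let Ad_F ρ̄ ⊆ Ad ρ̄ be the subrepresentation of filtration-preserving endomorphisms. Suppose Hom_Γ(ρ̄_i, ρ̄_j) = 0 for all i ≠ j. Then H^0(Γ, Ad_F ρ̄) = H^0(Γ, Ad ρ̄) and the natural map H^1(Γ, Ad_F ρ̄) → H^1(Γ, Ad ρ̄) is injective. -/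
/-!
An endomorphism `f` of `V` whose commutators `[ρ g, f]` preserve the filtration already
preserves it. Indeed `f` trivially maps `Fil i` into `Fil (i + K)`; if it maps `Fil i` into
`Fil (i + d + 1)` for all `i`, then on `Fil i / Fil (i - 1) → Fil (i + d + 1) / Fil (i + d)` it
induces a `Γ`-equivariant map between distinct graded pieces, which vanishes, so `f` maps
`Fil i` into `Fil (i + d)`. Descending to `d = 0` gives the claim. Both parts of the theorem
are instances: for `H^0` the commutators vanish, and for `H^1` an `Ad_F`-valued cocycle
`c g = ρ g ∘ f ∘ ρ g⁻¹ - f` has `[ρ g, f] = c g ∘ ρ g`.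
-/

lemma Representation.coboundary_apply_self_apply {k Γ V : Type*} [CommRing k] [Group Γ]
    [AddCommGroup V] [Module k V] (ρ : Representation k Γ V) {f c : Module.End k V} {g : Γ}
    (hc : c = ρ g ∘ₗ f ∘ₗ ρ g⁻¹ - f) (v : V) :
    c (ρ g v) = ρ g (f v) - f (ρ g v) := by
  simp [hc]

section FilteredRepresentation

variable {k Γ V : Type*} [CommRing k] [Group Γ] [AddCommGroup V] [Module k V]

/-- `Hom_Γ(Fil i / Fil (i - 1), Fil j / Fil (j - 1)) = 0` for `i ≠ j`, with homomorphisms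
between subquotients represented by endomorphisms of `V`. -/
def Representation.GradedHomsVanish (ρ : Representation k Γ V) (K : ℕ)
    (Fil : ℕ → Submodule k V) : Prop :=
  ∀ i j : ℕ, 1 ≤ i → i ≤ K → 1 ≤ j → j ≤ K → i ≠ j →
    ∀ T : V →ₗ[k] V,
      (∀ v ∈ Fil i, T v ∈ Fil j) →
      (∀ v ∈ Fil (i - 1), T v ∈ Fil (j - 1)) →
      (∀ (g : Γ), ∀ v ∈ Fil i, ρ g (T v) - T (ρ g v) ∈ Fil (j - 1)) →
      ∀ v ∈ Fil i, T v ∈ Fil (j - 1)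

variable {ρ : Representation k Γ V} {K : ℕ} {Fil : ℕ → Submodule k V}

lemma mapsTo_add_of_mapsTo_add_succ (h0 : Fil 0 = ⊥) (htop : Fil K = ⊤)
    (hmono : Monotone Fil)
    (hom0 : ρ.GradedHomsVanish K Fil) {f : Module.End k V}
    (hcomm : ∀ (g : Γ) (i : ℕ), ∀ v ∈ Fil i, ρ g (f v) - f (ρ g v) ∈ Fil i)
    {d : ℕ} (hf : ∀ i, ∀ v ∈ Fil i, f v ∈ Fil (i + (d + 1))) :
    ∀ i, ∀ v ∈ Fil i, f v ∈ Fil (i + d) := by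
  intro i v hv
  rcases Nat.eq_zero_or_pos i with rfl | hi
  · rw [h0, Submodule.mem_bot] at hv
    simp [hv]
  by_cases hK : K ≤ i + d
  · exact hmono hK (by simp [htop] : f v ∈ Fil K)
  have hj : i + (d + 1) - 1 = i + d := by omega
  have hpred : i - 1 + (d + 1) = i + d := by omega
  have key := hom0 i (i + (d + 1)) hi (by omega) (by omega) (by omega) (by omega) f (hf i)
    (fun w hw => hj ▸ hpred ▸ hf (i - 1) w hw)
    (fun g w hw => hj ▸ hmono (by omega) (hcomm g i w hw)) v hv
  rwa [hj] at key

lemma mapsTo_of_commutator_mapsTo (h0 : Fil 0 = ⊥) (htop : Fil K = ⊤)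
    (hmono : Monotone Fil)
    (hom0 : ρ.GradedHomsVanish K Fil) {f : Module.End k V}
    (hcomm : ∀ (g : Γ) (i : ℕ), ∀ v ∈ Fil i, ρ g (f v) - f (ρ g v) ∈ Fil i) :
    ∀ i, ∀ v ∈ Fil i, f v ∈ Fil i := by
  have hshift : ∀ d ≤ K, ∀ i, ∀ v ∈ Fil i, f v ∈ Fil (i + d) := fun d hd =>
    Nat.decreasingInduction (motive := fun d _ => ∀ i, ∀ v ∈ Fil i, f v ∈ Fil (i + d))
      (fun _ _ => mapsTo_add_of_mapsTo_add_succ h0 htop hmono hom0 hcomm)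
      (fun i v _ => hmono (by omega) (by simp [htop] : f v ∈ Fil K)) hd
  exact hshift 0 K.zero_le

end FilteredRepresentation

theorem statement_7_general {k : Type*} [Field k] {Γ : Type*} [Group Γ]
    {V : Type*} [AddCommGroup V] [Module k V]
    (ρ : Representation k Γ V) (K : ℕ) (Fil : ℕ → Submodule k V)
    (h0 : Fil 0 = ⊥) (htop : Fil K = ⊤) (hmono : Monotone Fil)
    (hstab : ∀ (g : Γ) (i : ℕ), ∀ v ∈ Fil i, ρ g v ∈ Fil i)
    (hom0 : ∀ i j : ℕ, 1 ≤ i → i ≤ K → 1 ≤ j → j ≤ K → i ≠ j →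
      ∀ T : V →ₗ[k] V,
        (∀ v ∈ Fil i, T v ∈ Fil j) →
        (∀ v ∈ Fil (i - 1), T v ∈ Fil (j - 1)) →
        (∀ (g : Γ), ∀ v ∈ Fil i, ρ g (T v) - T (ρ g v) ∈ Fil (j - 1)) →
        ∀ v ∈ Fil i, T v ∈ Fil (j - 1)) :
    (∀ f : Module.End k V, (∀ g : Γ, (ρ g) ∘ₗ f = f ∘ₗ (ρ g)) →
        ∀ (i : ℕ), ∀ v ∈ Fil i, f v ∈ Fil i) ∧
      (∀ c : Γ → Module.End k V,
        (∀ (g : Γ) (i : ℕ), ∀ v ∈ Fil i, c g v ∈ Fil i) →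
        (∀ g h : Γ, c (g * h) = c g + (ρ g) ∘ₗ (c h) ∘ₗ (ρ g⁻¹)) →
        (∃ f : Module.End k V, ∀ g : Γ, c g = (ρ g) ∘ₗ f ∘ₗ (ρ g⁻¹) - f) →
        ∃ f : Module.End k V, (∀ (i : ℕ), ∀ v ∈ Fil i, f v ∈ Fil i) ∧
          ∀ g : Γ, c g = (ρ g) ∘ₗ f ∘ₗ (ρ g⁻¹) - f) := by
  refine ⟨fun f hf => mapsTo_of_commutator_mapsTo h0 htop hmono hom0 fun g i v _ => ?_,
    fun c hcF _ ⟨f, hf⟩ => ⟨f, mapsTo_of_commutator_mapsTo h0 htop hmono hom0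
      fun g i v hv => ?_, hf⟩⟩
  · rw [← LinearMap.comp_apply, hf g, LinearMap.comp_apply, sub_self]
    exact zero_mem _
  · rw [← ρ.coboundary_apply_self_apply (hf g)]
    exact hcF g i _ (hstab g i v hv)

/-- Let `ρ̄` be a representation of `Γ` on a finite-dimensional `k`-vector
space `V` preserving a filtration `Fil` with graded pieces `ρ̄_1, …, ρ̄_K`, and let
`Ad_F ρ̄ ⊆ Ad ρ̄` be the filtration-preserving endomorphisms.  Assume
`Hom_Γ(ρ̄_i, ρ̄_j) = 0` for `i ≠ j` (encoded below via linear maps between the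
subquotients `Fil i / Fil (i-1)`).  Then:
(1) `H^0(Γ, Ad_F ρ̄) = H^0(Γ, Ad ρ̄)`, i.e. every `Γ`-equivariant endomorphism of `V`
    preserves the filtration; and
(2) `H^1(Γ, Ad_F ρ̄) → H^1(Γ, Ad ρ̄)` is injective, i.e. every `Ad_F`-valued
    `1`-cocycle which is an `Ad`-coboundary is an `Ad_F`-coboundary. -/
theorem statement_7 {k : Type*} [Field k] [Finite k] {Γ : Type*} [Group Γ]
    {V : Type*} [AddCommGroup V] [Module k V] [FiniteDimensional k V]
    (ρ : Representation k Γ V) (K : ℕ) (Fil : ℕ → Submodule k V)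
    (h0 : Fil 0 = ⊥) (htop : Fil K = ⊤) (hmono : Monotone Fil)
    (hstab : ∀ (g : Γ) (i : ℕ), ∀ v ∈ Fil i, ρ g v ∈ Fil i)
    (hom0 : ∀ i j : ℕ, 1 ≤ i → i ≤ K → 1 ≤ j → j ≤ K → i ≠ j →
      ∀ T : V →ₗ[k] V,
        (∀ v ∈ Fil i, T v ∈ Fil j) →
        (∀ v ∈ Fil (i - 1), T v ∈ Fil (j - 1)) →
        (∀ (g : Γ), ∀ v ∈ Fil i, ρ g (T v) - T (ρ g v) ∈ Fil (j - 1)) →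
        ∀ v ∈ Fil i, T v ∈ Fil (j - 1)) :
    (∀ f : Module.End k V, (∀ g : Γ, (ρ g) ∘ₗ f = f ∘ₗ (ρ g)) →
        ∀ (i : ℕ), ∀ v ∈ Fil i, f v ∈ Fil i) ∧
      (∀ c : Γ → Module.End k V,
        (∀ (g : Γ) (i : ℕ), ∀ v ∈ Fil i, c g v ∈ Fil i) →
        (∀ g h : Γ, c (g * h) = c g + (ρ g) ∘ₗ (c h) ∘ₗ (ρ g⁻¹)) →
        (∃ f : Module.End k V, ∀ g : Γ, c g = (ρ g) ∘ₗ f ∘ₗ (ρ g⁻¹) - f) →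
        ∃ f : Module.End k V, (∀ (i : ℕ), ∀ v ∈ Fil i, f v ∈ Fil i) ∧
          ∀ g : Γ, c g = (ρ g) ∘ₗ f ∘ₗ (ρ g⁻¹) - f) :=
  statement_7_general ρ K Fil h0 htop hmono hstab hom0
end
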